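/- Let G be a connected graph and P, P' distinguishable regular bounded profiles in G. Then the set 𝒜_{P,P'} of separations efficiently distinguishing P and P' is closed under taking limits: if (A,B) is a separation of G such that for every finite set Z of vertices there exists (A',B') ∈ 𝒜_{P,P'} with A' ∩ Z = A ∩ Z and B' ∩ Z = B ∩ Z, then (A,B) ∈ 𝒜_{P,P'}. -/

import Mathlib

/-- A separation of a graph `G`: a pair of vertex sets covering `V` with no edge
between `A ∖ B` and `B ∖ A`. -/
structure GraphSep {V : Type} (G : SimpleGraph V) where
  A : Set V
  B : Set V
  union_eq : A ∪ B = Set.univ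
  no_edge : ∀ a ∈ A \ B, ∀ b ∈ B \ A, ¬ G.Adj a b

namespace GraphSep

variable {V V' : Type} {G : SimpleGraph V} {G' : SimpleGraph V'}

/-- The inverse `(B,A)` of a separation `(A,B)`. -/
def inv (s : GraphSep G) : GraphSep G where
  A := s.B
  B := s.A
  union_eq := by rw [Set.union_comm]; exact s.union_eq
  no_edge := fun a ha b hb h => s.no_edge b hb a ha h.symm

/-- The separator `A ∩ B`. -/
def sepSet (s : GraphSep G) : Set V := s.A ∩ s.B

/-- The order `|A ∩ B|` of a separation, as an extended natural number. -/
noncomputable def order (s : GraphSep G) : ℕ∞ := (s.A ∩ s.B).encard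

/-- `(A,B) ≤ (C,D)` iff `A ⊆ C` and `D ⊆ B`. -/
protected def le (s t : GraphSep G) : Prop := s.A ⊆ t.A ∧ t.B ⊆ s.B

/-- Two separations are nested if after possibly replacing either by its inverse
they are `≤`-comparable. -/
def Nested (s t : GraphSep G) : Prop :=
  s.le t ∨ s.le t.inv ∨ s.inv.le t ∨ s.inv.le t.inv

lemma mem_A_or_B (s : GraphSep G) (x : V) : x ∈ s.A ∨ x ∈ s.B := by
  have h : x ∈ s.A ∪ s.B := by rw [s.union_eq]; exact Set.mem_univ x
  exact (Set.mem_union _ _ _).1 h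

/-- The join `(A,B) ∨ (C,D) = (A ∪ C, B ∩ D)`. -/
def join (s t : GraphSep G) : GraphSep G where
  A := s.A ∪ t.A
  B := s.B ∩ t.B
  union_eq := by
    apply Set.eq_univ_of_forall
    intro x
    rcases s.mem_A_or_B x with h1 | h1
    · exact Or.inl (Or.inl h1)
    · rcases t.mem_A_or_B x with h2 | h2
      · exact Or.inl (Or.inr h2)
      · exact Or.inr ⟨h1, h2⟩
  no_edge := by
    rintro a ⟨haA, haB⟩ b ⟨hbB, hbA⟩ hadj
    by_cases hsB : a ∈ s.B
    · have hatB : a ∉ t.B := fun h => haB ⟨hsB, h⟩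
      have hatA : a ∈ t.A := (t.mem_A_or_B a).resolve_right hatB
      exact t.no_edge a ⟨hatA, hatB⟩ b ⟨hbB.2, fun h => hbA (Or.inr h)⟩ hadj
    · have hasA : a ∈ s.A := (s.mem_A_or_B a).resolve_right hsB
      exact s.no_edge a ⟨hasA, hsB⟩ b ⟨hbB.1, fun h => hbA (Or.inl h)⟩ hadj

/-- The image of a separation under a graph isomorphism. -/
def map (φ : G ≃g G') (s : GraphSep G) : GraphSep G' where
  A := ⇑φ '' s.A
  B := ⇑φ '' s.B
  union_eq := by
    apply Set.eq_univ_of_forall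
    intro y
    rcases s.mem_A_or_B (φ.symm y) with h | h
    · exact Or.inl ⟨φ.symm y, h, φ.apply_symm_apply y⟩
    · exact Or.inr ⟨φ.symm y, h, φ.apply_symm_apply y⟩
  no_edge := by
    rintro a ⟨⟨x, hxA, rfl⟩, haB⟩ b ⟨⟨y, hyB, rfl⟩, hbA⟩ hadj
    exact s.no_edge x ⟨hxA, fun h => haB ⟨x, h, rfl⟩⟩ y ⟨hyB, fun h => hbA ⟨y, h, rfl⟩⟩
      (φ.map_adj_iff.mp hadj)

/-- The neighbourhood of a set of vertices. -/
def nbhd (G : SimpleGraph V) (X : Set V) : Set V := {v | v ∉ X ∧ ∃ x ∈ X, G.Adj v x}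

/-- `w` can be reached from `v` by a walk avoiding `X`. -/
def AvoidReach (G : SimpleGraph V) (X : Set V) (v w : V) : Prop :=
  ∃ p : G.Walk v w, ∀ u ∈ p.support, u ∉ X

/-- `C` is a (connected) component of `G − X`. -/
def IsCompOf (G : SimpleGraph V) (X C : Set V) : Prop :=
  ∃ v, v ∉ X ∧ C = {w | AvoidReach G X v w}

/-- A separation `(A,B)` is tight if each of `A ∖ B` and `B ∖ A` contains a component
of `G − (A ∩ B)` whose neighbourhood is all of `A ∩ B`. -/
def IsTight (s : GraphSep G) : Prop :=
  (∃ C, IsCompOf G s.sepSet C ∧ nbhd G C = s.sepSet ∧ C ⊆ s.A \ s.B) ∧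
  (∃ C, IsCompOf G s.sepSet C ∧ nbhd G C = s.sepSet ∧ C ⊆ s.B \ s.A)

/-- An orientation of `S_k`: it contains only separations of order `< k`, contains
at least one of `s, s⁻¹` for every separation of order `< k`, and contains both only
if they coincide. -/
def IsOrientation (k : ℕ∞) (P : Set (GraphSep G)) : Prop :=
  (∀ s ∈ P, s.order < k) ∧
  (∀ s : GraphSep G, s.order < k → (s ∈ P ∨ s.inv ∈ P)) ∧
  (∀ s ∈ P, s.inv ∈ P → s.inv = s)

/-- Consistency: no two members `r, s` with distinct underlying separations satisfy
`r⁻¹ ≤ s`. -/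
def Consistent (P : Set (GraphSep G)) : Prop :=
  ∀ r ∈ P, ∀ s ∈ P, r.inv.le s → r = s ∨ r = s.inv

/-- A `k`-profile: a consistent orientation of `S_k` satisfying the profile property. -/
def IsProfile (k : ℕ∞) (P : Set (GraphSep G)) : Prop :=
  IsOrientation k P ∧ Consistent P ∧ ∀ s ∈ P, ∀ t ∈ P, (s.join t).inv ∉ P

/-- A profile in `G` is a `k`-profile for some `k ∈ ℕ ∪ {ℵ₀}`. -/
def IsProfileIn (G : SimpleGraph V) (P : Set (GraphSep G)) : Prop := ∃ k : ℕ∞, IsProfile k P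

/-- A profile is regular if it contains no separation of the form `(V, X)`. -/
def RegularP (P : Set (GraphSep G)) : Prop := ∀ s ∈ P, s.A ≠ Set.univ

/-- A profile is bounded if it is a `k`-profile for some finite `k` and is not a subset
of any `ℵ₀`-profile. -/
def BoundedP (P : Set (GraphSep G)) : Prop :=
  (∃ k : ℕ, IsProfile (k : ℕ∞) P) ∧ ∀ Q : Set (GraphSep G), IsProfile ⊤ Q → ¬ P ⊆ Q

/-- `s` distinguishes the profiles `P` and `P'`. -/
def Distinguishes (s : GraphSep G) (P P' : Set (GraphSep G)) : Prop :=
  (s ∈ P ∧ s.inv ∈ P') ∨ (s.inv ∈ P ∧ s ∈ P')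

/-- `s` distinguishes `P` and `P'` efficiently: it has minimum order among all
separations distinguishing `P` and `P'`. -/
def EffDist (s : GraphSep G) (P P' : Set (GraphSep G)) : Prop :=
  Distinguishes s P P' ∧ ∀ t : GraphSep G, Distinguishes t P P' → s.order ≤ t.order

/-- `P` and `P'` are distinguishable: some finite-order separation distinguishes them. -/
def Distinguishable (P P' : Set (GraphSep G)) : Prop :=
  ∃ s : GraphSep G, s.order < ⊤ ∧ Distinguishes s P P'

/-- Robustness of a profile. -/
def RobustP (P : Set (GraphSep G)) : Prop :=
  ∀ s ∈ P, ∀ t : GraphSep G, t.order < ⊤ →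
    (s.join t).order < s.order → (s.join t.inv).order < s.order →
    (s.join t ∈ P ∨ s.join t.inv ∈ P)

/-- A `k`-profile is principal if for every vertex set `X` with `|X| < k` it contains
`(V ∖ C, C ∪ X)` for some component `C` of `G − X`. -/
def PrincipalP (k : ℕ∞) (P : Set (GraphSep G)) : Prop :=
  ∀ X : Set V, X.encard < k →
    ∃ C, IsCompOf G X C ∧ ∃ s ∈ P, s.A = Cᶜ ∧ s.B = C ∪ X

/-- `c` is a corner separation of `s` and `t`. -/
def IsCornerSep (s t c : GraphSep G) : Prop :=
  ∃ s' ∈ ({s, s.inv} : Set (GraphSep G)), ∃ t' ∈ ({t, t.inv} : Set (GraphSep G)),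
    c = s'.join t' ∨ c = (s'.join t').inv

/-- The set `S ⊆ V ∖ {x,y}` separates `x` from `y` in `G`. -/
def SeparatesIn (G : SimpleGraph V) (x y : V) (S : Set V) : Prop :=
  x ∉ S ∧ y ∉ S ∧ ∀ p : G.Walk x y, ∃ u ∈ p.support, u ∈ S

/-- `S` is a `⊆`-minimal `x`–`y`-separator in `G`. -/
def MinSeparator (G : SimpleGraph V) (x y : V) (S : Set V) : Prop :=
  SeparatesIn G x y S ∧ ∀ S' ⊆ S, SeparatesIn G x y S' → S' = S

/-- The separation of `G` induced by an (oriented) edge of a tree-decomposition. -/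
def InducedSep {ι : Type} (T : SimpleGraph ι) (𝒱 : ι → Set V) (x : GraphSep G) : Prop :=
  ∃ t t' : ι, T.Adj t t' ∧
    x.A = (⋃ u ∈ {u : ι | ∃ p : T.Walk u t, Sym2.mk t t' ∉ p.edges}, 𝒱 u) ∧
    x.B = (⋃ u ∈ {u : ι | ∃ p : T.Walk u t', Sym2.mk t t' ∉ p.edges}, 𝒱 u)

/-- Opposite pairs of corner separations of `s` and `t`. -/
def OppPair (s t c d : GraphSep G) : Prop :=
  (c = s.join t ∧ d = s.inv.join t.inv) ∨ (c = s.inv.join t.inv ∧ d = s.join t) ∨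
  (c = s.join t.inv ∧ d = s.inv.join t) ∨ (c = s.inv.join t ∧ d = s.join t.inv)

end GraphSep

/-! A limit `s` of efficient distinguishers of `P` and `P'` has order at most theirs, as every
finite part of its separator lies in the separator of an approximant; so both profiles orient `s`,
and it remains to rule out that they orient it the same way, say `s ∈ P ∩ P'`. Along an
ultrafilter on finite vertex sets `Z`, one of the profiles, say `P`, eventually contains the
inverse of the approximant `t_Z` agreeing with `s` on `Z`. The corners `ρ_Z = s ∨ t_Z⁻¹` then lie
in `P`, eventually contain any given finite vertex set `X` in their side `A`, and meet `X` on
their side `B` only within the separator of `s`. Orienting each finite-order `w` as `P` eventually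
orients `w ∨ ρ_Z` yields an `ℵ₀`-profile extending `P`, contradicting boundedness. -/

namespace GraphSep

variable {V : Type} {G : SimpleGraph V}

@[ext]
lemma ext {s t : GraphSep G} (hA : s.A = t.A) (hB : s.B = t.B) : s = t := by
  cases s; cases t; cases hA; cases hB; rfl

@[simp] lemma inv_A (s : GraphSep G) : s.inv.A = s.B := rfl
@[simp] lemma inv_B (s : GraphSep G) : s.inv.B = s.A := rfl
@[simp] lemma join_A (s t : GraphSep G) : (s.join t).A = s.A ∪ t.A := rfl
@[simp] lemma join_B (s t : GraphSep G) : (s.join t).B = s.B ∩ t.B := rfl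

@[simp] lemma inv_inv (s : GraphSep G) : s.inv.inv = s := rfl

lemma sepSet_inv (s : GraphSep G) : s.inv.sepSet = s.sepSet := Set.inter_comm _ _

lemma order_eq_encard_sepSet (s : GraphSep G) : s.order = s.sepSet.encard := rfl

lemma order_inv (s : GraphSep G) : s.inv.order = s.order := by
  rw [order_eq_encard_sepSet, sepSet_inv, order_eq_encard_sepSet]

lemma order_lt_top_iff (s : GraphSep G) : s.order < ⊤ ↔ s.sepSet.Finite :=
  Set.encard_lt_top_iff

lemma sepSet_join_subset {s t : GraphSep G} (h : s.sepSet ⊆ t.A) :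
    (s.join t).sepSet ⊆ t.sepSet := by
  rintro x ⟨hx | hx, hsB, htB⟩
  · exact ⟨h ⟨hx, hsB⟩, htB⟩
  · exact ⟨hx, htB⟩

lemma order_join_le {s t : GraphSep G} (h : s.sepSet ⊆ t.A) : (s.join t).order ≤ t.order :=
  Set.encard_mono (sepSet_join_subset h)

lemma sepSet_join_subset_union (s t : GraphSep G) :
    (s.join t).sepSet ⊆ s.sepSet ∪ t.sepSet := by
  rintro x ⟨hx | hx, hsB, htB⟩
  · exact Or.inl ⟨hx, hsB⟩
  · exact Or.inr ⟨hx, htB⟩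

lemma join_join_distrib_right (r s t : GraphSep G) :
    (r.join s).join t = (r.join t).join (s.join t) :=
  ext (Set.union_union_distrib_right _ _ _) (Set.inter_inter_distrib_right _ _ _)

lemma inv_join_inv_join_eq_inv {w ρ : GraphSep G} (h : w.sepSet ⊆ ρ.A) :
    (w.join ρ).inv.join (w.inv.join ρ).inv = ρ.inv := by
  ext x
  · simp only [inv_A, join_B, join_A, Set.mem_union, Set.mem_inter_iff]
    rcases w.mem_A_or_B x with hx | hx <;> tauto
  · simp only [inv_B, join_B, join_A, Set.mem_inter_iff, Set.mem_union]
    have hx := @h x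
    simp only [sepSet, Set.mem_inter_iff] at hx
    tauto

lemma Distinguishes.inv {s : GraphSep G} {P P' : Set (GraphSep G)}
    (h : Distinguishes s P P') : Distinguishes s.inv P P' := by
  unfold Distinguishes at *
  rw [inv_inv]
  tauto

lemma Distinguishes.symm {s : GraphSep G} {P P' : Set (GraphSep G)}
    (h : Distinguishes s P P') : Distinguishes s P' P := by
  unfold Distinguishes at *
  tauto

lemma order_le_of_forall_finite {s : GraphSep G} {n : ℕ∞}
    (h : ∀ Z : Set V, Z.Finite →
      ∃ t : GraphSep G, t.order ≤ n ∧ t.A ∩ Z = s.A ∩ Z ∧ t.B ∩ Z = s.B ∩ Z) :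
    s.order ≤ n := by
  by_contra! hlt
  have hn : n ≠ ⊤ := hlt.ne_top
  obtain ⟨Z, hZs, hZcard⟩ := Set.exists_subset_encard_eq ((ENat.add_one_le_iff hn).mpr hlt)
  have hZfin : Z.Finite :=
    Set.encard_ne_top_iff.mp (hZcard ▸ WithTop.add_ne_top.mpr ⟨hn, WithTop.one_ne_top⟩)
  obtain ⟨t, htn, hA, hB⟩ := h Z hZfin
  have hZt : Z ⊆ t.sepSet := fun x hx =>
    ⟨(hA.symm.subset ⟨(hZs hx).1, hx⟩).1, (hB.symm.subset ⟨(hZs hx).2, hx⟩).1⟩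
  have : n + 1 ≤ n := hZcard ▸ (Set.encard_mono hZt).trans htn
  exact (ENat.add_one_le_iff hn).mp this |>.false

section Profile

variable {k : ℕ∞} {R : Set (GraphSep G)}

lemma IsProfile.order_lt (hR : IsProfile k R) {s : GraphSep G} (hs : s ∈ R) : s.order < k :=
  hR.1.1 s hs

lemma IsProfile.mem_or_inv_mem (hR : IsProfile k R) {s : GraphSep G} (hs : s.order < k) :
    s ∈ R ∨ s.inv ∈ R :=
  hR.1.2.1 s hs

lemma Distinguishes.order_lt {s : GraphSep G} {P' : Set (GraphSep G)}
    (h : Distinguishes s R P') (hR : IsProfile k R) : s.order < k := by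
  rcases h with ⟨hs, -⟩ | ⟨hs, -⟩
  · exact hR.order_lt hs
  · exact order_inv s ▸ hR.order_lt hs

lemma IsProfile.join_mem (hR : IsProfile k R) {s t : GraphSep G} (hs : s ∈ R) (ht : t ∈ R)
    (h : (s.join t).order < k) : s.join t ∈ R :=
  (hR.mem_or_inv_mem h).resolve_right (hR.2.2 s hs t ht)

lemma IsProfile.le_order_join (hR : IsProfile k R) (hreg : RegularP R) {s t : GraphSep G}
    (hs : s ∈ R) (ht : t ∈ R) (hst : s.A ∪ t.A = Set.univ) : k ≤ (s.join t).order := by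
  by_contra! h
  exact hreg _ (hR.join_mem hs ht h) hst

lemma IsProfile.join_mem_or_inv_join_mem (hR : IsProfile k R) {w ρ : GraphSep G} (hρ : ρ ∈ R)
    (hw : w.sepSet ⊆ ρ.A) : w.join ρ ∈ R ∨ w.inv.join ρ ∈ R := by
  have hord : ∀ v : GraphSep G, v.sepSet ⊆ ρ.A → (v.join ρ).order < k := fun v hv =>
    (order_join_le hv).trans_lt (hR.order_lt hρ)
  rcases hR.mem_or_inv_mem (hord w hw) with h₁ | h₁
  · exact Or.inl h₁
  rcases hR.mem_or_inv_mem (hord w.inv (sepSet_inv w ▸ hw)) with h₂ | h₂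
  · exact Or.inr h₂
  have := hR.2.2 _ h₁ _ h₂
  rw [inv_join_inv_join_eq_inv hw, inv_inv] at this
  exact absurd hρ this

lemma IsProfile.not_join_mem_and_join_mem (hR : IsProfile k R) (hreg : RegularP R)
    {w₁ w₂ ρ : GraphSep G} (hle : w₁.B ⊆ w₂.A) (hρ : (w₂.sepSet ∩ ρ.B).encard < k)
    (h₁ : w₁.join ρ ∈ R) (h₂ : w₂.join ρ ∈ R) : False := by
  have hcover : (w₁.join ρ).A ∪ (w₂.join ρ).A = Set.univ :=
    Set.eq_univ_of_forall fun x => (w₁.mem_A_or_B x).elim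
      (fun hx => Or.inl (Or.inl hx)) (fun hx => Or.inr (Or.inl (hle hx)))
  have hsub : ((w₁.join ρ).join (w₂.join ρ)).sepSet ⊆ w₂.sepSet ∩ ρ.B :=
    fun x ⟨_, ⟨hx₁, hxρ⟩, hx₂, _⟩ => ⟨⟨hle hx₁, hx₂⟩, hxρ⟩
  exact ((hR.le_order_join hreg h₁ h₂ hcover).trans (Set.encard_mono hsub)).not_gt hρ

lemma IsProfile.join_join_mem (hR : IsProfile k R) {w₁ w₂ ρ : GraphSep G} (hρ : ρ ∈ R)
    (hw₁ : w₁.sepSet ⊆ ρ.A) (hw₂ : w₂.sepSet ⊆ ρ.A)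
    (h₁ : w₁.join ρ ∈ R) (h₂ : w₂.join ρ ∈ R) : (w₁.join w₂).join ρ ∈ R := by
  have hw : (w₁.join w₂).sepSet ⊆ ρ.A :=
    (sepSet_join_subset_union w₁ w₂).trans (Set.union_subset hw₁ hw₂)
  have hord : ((w₁.join w₂).join ρ).order < k := (order_join_le hw).trans_lt (hR.order_lt hρ)
  rw [join_join_distrib_right] at hord ⊢
  exact hR.join_mem h₁ h₂ hord

theorem IsProfile.exists_profile_top_superset {ι : Type*} (hR : IsProfile k R)
    (hreg : RegularP R) (U : Ultrafilter ι) (ρ : ι → GraphSep G)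
    (hρR : ∀ᶠ i in U, ρ i ∈ R) (hρA : ∀ X : Set V, X.Finite → ∀ᶠ i in U, X ⊆ (ρ i).A)
    (hρB : ∀ X : Set V, X.Finite → ∀ᶠ i in U, (X ∩ (ρ i).B).encard < k) :
    ∃ Q : Set (GraphSep G), IsProfile ⊤ Q ∧ R ⊆ Q := by
  set Q := {w : GraphSep G | w.order < ⊤ ∧ ∀ᶠ i in U, w.join (ρ i) ∈ R}
  have hfin : ∀ w : GraphSep G, w.order < ⊤ → ∀ᶠ i in U,
      ρ i ∈ R ∧ w.sepSet ⊆ (ρ i).A ∧ (w.sepSet ∩ (ρ i).B).encard < k := fun w hw =>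
    have hX := (order_lt_top_iff w).mp hw
    hρR.and ((hρA _ hX).and (hρB _ hX))
  have hclash : ∀ w₁ w₂ : GraphSep G, w₁.B ⊆ w₂.A → w₂.order < ⊤ →
      (∀ᶠ i in U, w₁.join (ρ i) ∈ R) → (∀ᶠ i in U, w₂.join (ρ i) ∈ R) → False := by
    intro w₁ w₂ hle hw₂ h₁ h₂
    obtain ⟨i, h₁, h₂, -, -, hB⟩ := (h₁.and (h₂.and (hfin w₂ hw₂))).exists
    exact hR.not_join_mem_and_join_mem hreg hle hB h₁ h₂
  refine ⟨Q, ⟨⟨fun w hw => hw.1, fun w hw => ?total,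
    fun w hw hw' => (hclash w w.inv subset_rfl hw'.1 hw.2 hw'.2).elim⟩,
    fun w₁ hw₁ w₂ hw₂ hle => (hclash w₁ w₂ hle.1 hw₂.1 hw₁.2 hw₂.2).elim,
    fun w₁ hw₁ w₂ hw₂ hw => ?profile⟩, fun w hw => ?superset⟩
  case total =>
    have : ∀ᶠ i in U, w.join (ρ i) ∈ R ∨ w.inv.join (ρ i) ∈ R :=
      (hfin w hw).mono fun i ⟨hρi, hA, _⟩ => hR.join_mem_or_inv_join_mem hρi hA
    rcases Ultrafilter.eventually_or.mp this with h | h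
    · exact Or.inl ⟨hw, h⟩
    · exact Or.inr ⟨(order_inv w).symm ▸ hw, h⟩
  case profile =>
    refine hclash (w₁.join w₂) _ subset_rfl hw.1 ?_ hw.2
    filter_upwards [hw₁.2, hw₂.2, hfin w₁ hw₁.1, hfin w₂ hw₂.1] with i h₁ h₂ hi₁ hi₂
    exact hR.join_join_mem hi₁.1 hi₁.2.1 hi₂.2.1 h₁ h₂
  case superset =>
    have hw' : w.order < ⊤ := (hR.order_lt hw).trans_le le_top
    refine ⟨hw', ?_⟩
    filter_upwards [hfin w hw'] with i hi
    exact hR.join_mem hw hi.1 ((order_join_le hi.2.1).trans_lt (hR.order_lt hi.1))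

theorem IsProfile.exists_profile_top_superset_of_limit (hR : IsProfile k R) (hreg : RegularP R)
    {σ : GraphSep G} (hσ : σ ∈ R) (T : Finset V → GraphSep G)
    (hT : ∀ Z : Finset V, (T Z).A ∩ Z = σ.A ∩ Z ∧ (T Z).B ∩ Z = σ.B ∩ Z)
    (U : Ultrafilter (Finset V)) (hU : (U : Filter (Finset V)) ≤ Filter.atTop)
    (hTR : ∀ᶠ Z in U, (T Z).inv ∈ R) :
    ∃ Q : Set (GraphSep G), IsProfile ⊤ Q ∧ R ⊆ Q := by
  have hsub : ∀ X : Set V, X.Finite → ∀ᶠ Z : Finset V in U, X ⊆ ↑Z := fun X hX =>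
    hU ((Filter.eventually_ge_atTop hX.toFinset).mono fun Z hZ => by simpa using hZ)
  have hA : ∀ (Z : Finset V) x, x ∈ (T Z).A → x ∈ (Z : Set V) → x ∈ σ.A := fun Z x hx hxZ =>
    ((hT Z).1.subset ⟨hx, hxZ⟩).1
  have hB : ∀ (Z : Finset V) x, x ∈ σ.B → x ∈ (Z : Set V) → x ∈ (T Z).B := fun Z x hx hxZ =>
    ((hT Z).2.symm.subset ⟨hx, hxZ⟩).1
  have hσfin : σ.sepSet.Finite := (order_lt_top_iff σ).mp ((hR.order_lt hσ).trans_le le_top)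
  refine hR.exists_profile_top_superset hreg U (fun Z => σ.join (T Z).inv) ?_ ?_ ?_
  · filter_upwards [hTR, hsub _ hσfin] with Z hTZ hσZ
    exact hR.join_mem hσ hTZ
      ((order_join_le fun x hx => hB Z x hx.2 (hσZ hx)).trans_lt (hR.order_lt hTZ))
  · intro X hX
    filter_upwards [hsub X hX] with Z hXZ
    exact fun x hx => (σ.mem_A_or_B x).imp id (hB Z x · (hXZ hx))
  · intro X hX
    filter_upwards [hsub X hX] with Z hXZ
    refine (Set.encard_mono ?_).trans_lt (hR.order_lt hσ)
    rintro x ⟨hxX, hxσ, hxT⟩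
    exact ⟨hA Z x hxT (hXZ hxX), hxσ⟩

end Profile

lemma BoundedP.not_eventually_inv_mem {P : Set (GraphSep G)} (hP : BoundedP P)
    (hreg : RegularP P) {σ : GraphSep G} (hσ : σ ∈ P) (T : Finset V → GraphSep G)
    (hT : ∀ Z : Finset V, (T Z).A ∩ Z = σ.A ∩ Z ∧ (T Z).B ∩ Z = σ.B ∩ Z)
    {U : Ultrafilter (Finset V)} (hU : (U : Filter (Finset V)) ≤ Filter.atTop) :
    ¬ ∀ᶠ Z in U, (T Z).inv ∈ P := by
  intro hTP
  obtain ⟨_, hk⟩ := hP.1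
  obtain ⟨Q, hQ, hPQ⟩ := hk.exists_profile_top_superset_of_limit hreg hσ T hT U hU hTP
  exact hP.2 Q hQ hPQ

lemma not_mem_and_mem_of_limit {P P' : Set (GraphSep G)} (hP : BoundedP P) (hP' : BoundedP P')
    (hreg : RegularP P) (hreg' : RegularP P') {s : GraphSep G}
    (hlim : ∀ Z : Set V, Z.Finite →
      ∃ t : GraphSep G, Distinguishes t P P' ∧ t.A ∩ Z = s.A ∩ Z ∧ t.B ∩ Z = s.B ∩ Z) :
    ¬ (s ∈ P ∧ s ∈ P') := by
  rintro ⟨hs, hs'⟩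
  choose T hTdist hTA hTB using fun Z : Finset V => hlim Z Z.finite_toSet
  let U := Ultrafilter.of (Filter.atTop : Filter (Finset V))
  have hT : ∀ Z : Finset V, (T Z).A ∩ Z = s.A ∩ Z ∧ (T Z).B ∩ Z = s.B ∩ Z :=
    fun Z => ⟨hTA Z, hTB Z⟩
  have : ∀ᶠ Z in U, (T Z).inv ∈ P ∨ (T Z).inv ∈ P' := Filter.Eventually.of_forall fun Z =>
    (hTdist Z).elim (fun h => Or.inr h.2) (fun h => Or.inl h.1)
  rcases Ultrafilter.eventually_or.mp this with h | h
  · exact hP.not_eventually_inv_mem hreg hs T hT (Ultrafilter.of_le _) h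
  · exact hP'.not_eventually_inv_mem hreg' hs' T hT (Ultrafilter.of_le _) h

end GraphSep

open GraphSep in
theorem stmt10_general {V : Type} (G : SimpleGraph V)
    (P P' : Set (GraphSep G))
    (hreg : RegularP P) (hreg' : RegularP P')
    (hbdd : BoundedP P) (hbdd' : BoundedP P')
    (s : GraphSep G)
    (hlim : ∀ Z : Set V, Z.Finite →
      ∃ t : GraphSep G, EffDist t P P' ∧ t.A ∩ Z = s.A ∩ Z ∧ t.B ∩ Z = s.B ∩ Z) :
    EffDist s P P' := by
  obtain ⟨t₀, ht₀, -, -⟩ := hlim ∅ Set.finite_empty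
  obtain ⟨k, hk⟩ := hbdd.1
  obtain ⟨k', hk'⟩ := hbdd'.1
  have hs_le : s.order ≤ t₀.order := order_le_of_forall_finite fun Z hZ =>
    let ⟨t, ht, hA, hB⟩ := hlim Z hZ
    ⟨t, ht.2 t₀ ht₀.1, hA, hB⟩
  have hdist : ∀ Z : Set V, Z.Finite →
      ∃ t : GraphSep G, Distinguishes t P P' ∧ t.A ∩ Z = s.A ∩ Z ∧ t.B ∩ Z = s.B ∩ Z :=
    fun Z hZ => let ⟨t, ht, hA, hB⟩ := hlim Z hZ; ⟨t, ht.1, hA, hB⟩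
  have hs := not_mem_and_mem_of_limit hbdd hbdd' hreg hreg' hdist
  have hs_inv := not_mem_and_mem_of_limit (s := s.inv) hbdd hbdd' hreg hreg' fun Z hZ =>
    let ⟨t, ht, hA, hB⟩ := hdist Z hZ
    ⟨t.inv, ht.inv, hB, hA⟩
  have hsP := hk.mem_or_inv_mem (hs_le.trans_lt (ht₀.1.order_lt hk))
  have hsP' := hk'.mem_or_inv_mem (hs_le.trans_lt (ht₀.1.symm.order_lt hk'))
  refine ⟨?_, fun t ht => hs_le.trans (ht₀.2 t ht)⟩
  unfold Distinguishes
  tauto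

open GraphSep in
/-- the set of separations efficiently distinguishing two distinguishable
regular bounded profiles is closed under taking limits. -/
theorem stmt10 {V : Type} (G : SimpleGraph V) (hG : G.Connected)
    (P P' : Set (GraphSep G))
    (hP : IsProfileIn G P) (hP' : IsProfileIn G P')
    (hreg : RegularP P) (hreg' : RegularP P')
    (hbdd : BoundedP P) (hbdd' : BoundedP P')
    (hdist : Distinguishable P P')
    (s : GraphSep G)
    (hlim : ∀ Z : Set V, Z.Finite →
      ∃ t : GraphSep G, EffDist t P P' ∧ t.A ∩ Z = s.A ∩ Z ∧ t.B ∩ Z = s.B ∩ Z) :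
    EffDist s P P' :=
  stmt10_general G P P' hreg hreg' hbdd hbdd' s hlim
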